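/- arXiv:math-ph/0303029 — 2 statements merged into one kernel-verified Lean document; each statement's English description precedes it below -/
import Mathlib

section
/- Define $h_F(x) = \tfrac{1}{2}[\tanh(\gamma(x+\bar{x})) - \tanh(\gamma(x-\bar{x}))]$ for $\gamma, \bar{x} > 0$. Then for the complex translation $x \mapsto x + ib$ with $\gamma|b| < \pi/4$, one has $|h_F(x+ib)| \le \frac{e^{2\gamma\bar{x}}}{(e^{2\gamma x} + e^{-2\gamma x})\cos(2\gamma b) + e^{2\gamma\bar{x}} + e^{-2\gamma\bar{x}}}$ for all $x \in \mathbb{R}$. -/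
open Real

/-!
Since `2 cosh(z + a) cosh(z - a) = cosh 2z + cosh 2a`, the half-difference of the two `tanh`s is
`sinh 2a / (cosh 2z + cosh 2a)`. For `z = γ(x + ib)` and `a = γx̄` the real part of the denominator is
`cosh(2γx) cos(2γb) + cosh(2γx̄) > 0` because `|2γb| < π/2`; bounding the modulus of the denominator
below by its real part and `sinh 2a` above by `e^{2a}/2` gives the claim.
-/

namespace Complex

theorem cosh_add_mul_I_re (x y : ℝ) : (cosh (x + y * I)).re = Real.cosh x * Real.cos y := by
  rw [cosh_add, cosh_mul_I, sinh_mul_I]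
  simp [cosh_ofReal_re, cos_ofReal_re, cosh_ofReal_im, sinh_ofReal_im]

theorem tanh_add_sub_tanh_sub_div_two {z a : ℂ} (h : cosh (2 * z) + cosh (2 * a) ≠ 0) :
    (tanh (z + a) - tanh (z - a)) / 2 = sinh (2 * a) / (cosh (2 * z) + cosh (2 * a)) := by
  have hprod : cosh (2 * z) + cosh (2 * a) = 2 * (cosh (z + a) * cosh (z - a)) := by
    rw [show 2 * z = (z + a) + (z - a) by ring, show 2 * a = (z + a) - (z - a) by ring,
      cosh_add (z + a), cosh_sub (z + a)]
    ring
  rw [hprod] at h ⊢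
  obtain ⟨hplus, hminus⟩ := mul_ne_zero_iff.mp (right_ne_zero_of_mul h)
  rw [tanh_eq_sinh_div_cosh, tanh_eq_sinh_div_cosh, div_sub_div _ _ hplus hminus, ← sinh_sub,
    show z + a - (z - a) = 2 * a by ring, div_div]
  ring

theorem norm_ofReal_div_le_div_re {c : ℝ} {w : ℂ} (hc : 0 ≤ c) (hw : 0 < w.re) :
    ‖(c : ℂ) / w‖ ≤ c / w.re := by
  rw [norm_div, norm_real, Real.norm_of_nonneg hc]
  exact div_le_div_of_nonneg_left hc hw (re_le_norm w)

end Complex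

theorem Real.sinh_le_exp_div_two (x : ℝ) : Real.sinh x ≤ Real.exp x / 2 := by
  rw [Real.sinh_eq]
  linarith [Real.exp_pos (-x)]

/-- Bound on the complex translation of the cut-off function
`h_F(x) = (tanh(γ(x+x̄)) - tanh(γ(x-x̄)))/2`. -/
theorem hF_complex_translation_bound
    (γ xbar b : ℝ) (hγ : 0 < γ) (hxbar : 0 < xbar) (hb : γ * |b| < π / 4) (x : ℝ) :
    ‖(Complex.tanh ((γ : ℂ) * ((x : ℂ) + (b : ℂ) * Complex.I + (xbar : ℂ)))
        - Complex.tanh ((γ : ℂ) * ((x : ℂ) + (b : ℂ) * Complex.I - (xbar : ℂ)))) / 2‖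
      ≤ Real.exp (2 * γ * xbar) /
        ((Real.exp (2 * γ * x) + Real.exp (-(2 * γ * x))) * Real.cos (2 * γ * b)
          + Real.exp (2 * γ * xbar) + Real.exp (-(2 * γ * xbar))) := by
  set z : ℂ := γ * (x + b * Complex.I)
  set a : ℂ := γ * xbar
  have hcos : 0 < Real.cos (2 * γ * b) := by
    refine Real.cos_pos_of_mem_Ioo ⟨?_, ?_⟩ <;> nlinarith [le_abs_self b, neg_abs_le b]
  have h2z : 2 * z = ((2 * γ * x : ℝ) : ℂ) + ((2 * γ * b : ℝ) : ℂ) * Complex.I := by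
    push_cast; ring
  have h2a : 2 * a = ((2 * γ * xbar : ℝ) : ℂ) := by push_cast; ring
  have hre : (Complex.cosh (2 * z) + Complex.cosh (2 * a)).re
      = Real.cosh (2 * γ * x) * Real.cos (2 * γ * b) + Real.cosh (2 * γ * xbar) := by
    rw [Complex.add_re, h2z, h2a, Complex.cosh_add_mul_I_re, Complex.cosh_ofReal_re]
  have hre_pos : 0 < (Complex.cosh (2 * z) + Complex.cosh (2 * a)).re := by
    rw [hre]; positivity
  have hsinh : 0 ≤ Real.sinh (2 * γ * xbar) := Real.sinh_nonneg_iff.mpr (by positivity)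
  rw [show (γ : ℂ) * (x + b * Complex.I + xbar) = z + a by ring,
    show (γ : ℂ) * (x + b * Complex.I - xbar) = z - a by ring,
    Complex.tanh_add_sub_tanh_sub_div_two (fun h ↦ by simp [h] at hre_pos), h2a,
    ← Complex.ofReal_sinh, ← h2a]
  calc _ ≤ Real.sinh (2 * γ * xbar) / (Complex.cosh (2 * z) + Complex.cosh (2 * a)).re :=
        Complex.norm_ofReal_div_le_div_re hsinh hre_pos
    _ ≤ Real.exp (2 * γ * xbar) / 2 / (Complex.cosh (2 * z) + Complex.cosh (2 * a)).re := by
        gcongr; exact Real.sinh_le_exp_div_two _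
    _ = _ := by rw [hre, Real.cosh_eq, Real.cosh_eq, div_div]; ring_nf
end

section
/- Let $J_0(x) = \tfrac{1}{2}[\tanh(\gamma(x+x_1)) - \tanh(\gamma(x-x_1))]$ with $\gamma, x_1 > 0$, analytically continued to $x+ib$ with $2\gamma|b| < \pi/2$. Then $|J_0(x+ib)| \le \frac{1}{\cos(2\gamma b)} e^{2\gamma(x+x_1)}$ for $x < 0$ and $|J_0(x+ib)| \le \frac{1}{\cos(2\gamma b)} e^{-2\gamma(x-x_1)}$ for $x > 0$. -/
/-!
When `A = a + v i` and `C = c + v i` share their imaginary part, `tanh A - tanh C = sinh (a - c) / (cosh A cosh C)`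
with `sinh (a - c)` real, and `|cosh (u + v i)| ≥ cosh u |cos v|`. Hence `|tanh A - tanh C|` is at most the real
difference `tanh a - tanh c` divided by `cos² v ≥ cos 2v`. The real difference is bounded by `1 + tanh a ≤ 2 e^{2a}`
and by `1 - tanh c ≤ 2 e^{-2c}`, which give the two exponential tails.
-/

open Real

namespace Real

theorem tanh_sub_tanh (a c : ℝ) : tanh a - tanh c = sinh (a - c) / (cosh a * cosh c) := by
  rw [sinh_sub, tanh_eq_sinh_div_cosh, tanh_eq_sinh_div_cosh]
  field_simp

theorem tanh_le_tanh {a c : ℝ} (h : c ≤ a) : tanh c ≤ tanh a := by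
  have : 0 ≤ sinh (a - c) / (cosh a * cosh c) :=
    div_nonneg (sinh_nonneg_iff.mpr (sub_nonneg.mpr h)) (by positivity)
  linarith [tanh_sub_tanh a c]

theorem tanh_add_one_le (a : ℝ) : tanh a + 1 ≤ 2 * exp (2 * a) := by
  have hexp : exp (2 * a) = exp a * exp a := by rw [← exp_add, two_mul]
  have hinv : exp a * exp (-a) = 1 := by rw [← exp_add, add_neg_cancel, exp_zero]
  rw [tanh_eq, div_add_one (by positivity), div_le_iff₀ (by positivity)]
  nlinarith [exp_pos a, exp_pos (-a)]

theorem one_sub_tanh_le (c : ℝ) : 1 - tanh c ≤ 2 * exp (-(2 * c)) := by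
  have := tanh_add_one_le (-c)
  rw [tanh_neg, mul_neg] at this
  linarith

theorem cos_two_mul_le_cos_sq (x : ℝ) : cos (2 * x) ≤ cos x ^ 2 := by
  rw [cos_two_mul]
  linarith [cos_sq_le_one x]

end Real

namespace Complex

theorem tanh_sub_tanh {A C : ℂ} (hA : cosh A ≠ 0) (hC : cosh C ≠ 0) :
    tanh A - tanh C = sinh (A - C) / (cosh A * cosh C) := by
  rw [sinh_sub, tanh_eq_sinh_div_cosh, tanh_eq_sinh_div_cosh]
  field_simp

theorem cosh_add_mul_I (u v : ℝ) :
    cosh (u + v * I) = (Real.cosh u * Real.cos v : ℝ) + (Real.sinh u * Real.sin v : ℝ) * I := by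
  rw [cosh_add, cosh_mul_I, sinh_mul_I, ← ofReal_cosh, ← ofReal_sinh, ← ofReal_cos, ← ofReal_sin]
  push_cast
  ring

theorem cosh_mul_abs_cos_le_norm_cosh (u v : ℝ) :
    Real.cosh u * |Real.cos v| ≤ ‖cosh (u + v * I)‖ := by
  rw [cosh_add_mul_I, norm_add_mul_I, Real.le_sqrt (by positivity) (by positivity), mul_pow, sq_abs,
    ← mul_pow]
  exact le_add_of_nonneg_right (sq_nonneg _)

theorem norm_tanh_sub_tanh_le {v : ℝ} (hv : Real.cos v ≠ 0) (a c : ℝ) :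
    ‖tanh (a + v * I) - tanh (c + v * I)‖ ≤ |Real.tanh a - Real.tanh c| / Real.cos v ^ 2 := by
  have hcos_pos : 0 < |Real.cos v| := abs_pos.mpr hv
  have hA := cosh_mul_abs_cos_le_norm_cosh a v
  have hC := cosh_mul_abs_cos_le_norm_cosh c v
  have hA0 : 0 < Real.cosh a * |Real.cos v| := mul_pos (cosh_pos a) hcos_pos
  have hC0 : 0 < Real.cosh c * |Real.cos v| := mul_pos (cosh_pos c) hcos_pos
  have hsub : (a + v * I) - (c + v * I) = ((a - c : ℝ) : ℂ) := by push_cast; ring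
  rw [tanh_sub_tanh (norm_pos_iff.mp (hA0.trans_le hA)) (norm_pos_iff.mp (hC0.trans_le hC)), hsub,
    ← ofReal_sinh, norm_div, norm_mul, norm_real, Real.norm_eq_abs, Real.tanh_sub_tanh, abs_div,
    abs_of_pos (mul_pos (cosh_pos a) (cosh_pos c)), div_div, ← sq_abs (Real.cos v)]
  calc |Real.sinh (a - c)| / (‖cosh (a + v * I)‖ * ‖cosh (c + v * I)‖)
      ≤ |Real.sinh (a - c)| / ((Real.cosh a * |Real.cos v|) * (Real.cosh c * |Real.cos v|)) :=
        div_le_div_of_nonneg_left (abs_nonneg _) (mul_pos hA0 hC0)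
          (mul_le_mul hA hC hC0.le (norm_nonneg _))
    _ = _ := by ring

theorem norm_tanh_sub_tanh_div_two_le {v : ℝ} (hv : 0 < Real.cos (2 * v)) {a c E : ℝ}
    (hca : c ≤ a) (hE : Real.tanh a - Real.tanh c ≤ 2 * E) :
    ‖(tanh (a + v * I) - tanh (c + v * I)) / 2‖
      ≤ 1 / Real.cos (2 * v) * E := by
  have hcos_sq : Real.cos (2 * v) ≤ Real.cos v ^ 2 := cos_two_mul_le_cos_sq v
  have hcos : Real.cos v ≠ 0 := fun h => by simp [h] at hcos_sq; linarith
  have htanh : 0 ≤ Real.tanh a - Real.tanh c := sub_nonneg.mpr (tanh_le_tanh hca)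
  calc ‖(tanh (a + v * I) - tanh (c + v * I)) / 2‖
      ≤ |Real.tanh a - Real.tanh c| / Real.cos v ^ 2 / 2 := by
        rw [norm_div, Complex.norm_two]
        gcongr
        exact norm_tanh_sub_tanh_le hcos a c
    _ ≤ 2 * E / Real.cos (2 * v) / 2 := by
        rw [abs_of_nonneg htanh]
        gcongr
        linarith
    _ = 1 / Real.cos (2 * v) * E := by ring

end Complex

/-- Pointwise bound on the complex translation of
`J₀(x) = (tanh(γ(x+x₁)) - tanh(γ(x-x₁)))/2`. -/
theorem J0_complex_translation_bound
    (γ x₁ b : ℝ) (hγ : 0 < γ) (hx₁ : 0 < x₁) (hb : 2 * γ * |b| < π / 2) (x : ℝ) :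
    (x < 0 →
      ‖(Complex.tanh ((γ : ℂ) * ((x : ℂ) + (b : ℂ) * Complex.I + (x₁ : ℂ)))
          - Complex.tanh ((γ : ℂ) * ((x : ℂ) + (b : ℂ) * Complex.I - (x₁ : ℂ)))) / 2‖
        ≤ (1 / Real.cos (2 * γ * b)) * Real.exp (2 * γ * (x + x₁))) ∧
    (0 < x →
      ‖(Complex.tanh ((γ : ℂ) * ((x : ℂ) + (b : ℂ) * Complex.I + (x₁ : ℂ)))
          - Complex.tanh ((γ : ℂ) * ((x : ℂ) + (b : ℂ) * Complex.I - (x₁ : ℂ)))) / 2‖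
        ≤ (1 / Real.cos (2 * γ * b)) * Real.exp (-(2 * γ) * (x - x₁))) := by
  have hca : γ * (x - x₁) ≤ γ * (x + x₁) := by nlinarith
  have hcos : 0 < Real.cos (2 * (γ * b)) := by
    rw [← cos_abs, abs_mul, abs_two, abs_mul, abs_of_pos hγ, ← mul_assoc]
    exact cos_pos_of_mem_Ioo ⟨by linarith [pi_pos, mul_nonneg hγ.le (abs_nonneg b)], hb⟩
  have hplus : (γ : ℂ) * ((x : ℂ) + (b : ℂ) * Complex.I + (x₁ : ℂ))
      = ((γ * (x + x₁) : ℝ) : ℂ) + ((γ * b : ℝ) : ℂ) * Complex.I := by push_cast; ring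
  have hminus : (γ : ℂ) * ((x : ℂ) + (b : ℂ) * Complex.I - (x₁ : ℂ))
      = ((γ * (x - x₁) : ℝ) : ℂ) + ((γ * b : ℝ) : ℂ) * Complex.I := by push_cast; ring
  rw [hplus, hminus, mul_assoc 2 γ b]
  refine ⟨fun _ => Complex.norm_tanh_sub_tanh_div_two_le hcos hca ?_,
    fun _ => Complex.norm_tanh_sub_tanh_div_two_le hcos hca ?_⟩
  · rw [mul_assoc]
    linarith [tanh_add_one_le (γ * (x + x₁)), neg_one_lt_tanh (γ * (x - x₁))]
  · rw [neg_mul, mul_assoc]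
    linarith [one_sub_tanh_le (γ * (x - x₁)), tanh_lt_one (γ * (x + x₁))]
end
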